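/- arXiv:2109.11957 — 7 statements merged into one kernel-verified Lean document; each statement's English description precedes it below -/
import Mathlib

section
/- Let G be a group, S a subset of G that generates G, and e : G → G a group endomorphism that is idempotent (e ∘ e = e). Then the kernel of e equals the normal closure in G of the set { e(s) * s⁻¹ : s ∈ S }. -/
/-- Kovács-style lemma (discrete form): for an idempotent endomorphism `e` of a group `G`
generated by `S`, the kernel of `e` is the normal closure of `{ e s * s⁻¹ | s ∈ S }`. -/
theorem kernel_eq_normalClosure_of_idempotent {G : Type*} [Group G]
    (S : Set G) (hS : Subgroup.closure S = ⊤)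
    (e : G →* G) (he : ∀ x : G, e (e x) = e x) :
    e.ker = Subgroup.normalClosure ((fun s => e s * s⁻¹) '' S) := by
  set N := Subgroup.normalClosure ((fun s => e s * s⁻¹) '' S) with hN
  apply le_antisymm
  · -- ker ≤ N: first show ∀ g, e g * g⁻¹ ∈ N
    have key : ∀ g : G, e g * g⁻¹ ∈ N := by
      intro g
      have hg : g ∈ Subgroup.closure S := hS ▸ Subgroup.mem_top g
      induction hg using Subgroup.closure_induction with
      | mem s hs => exact Subgroup.subset_normalClosure ⟨s, hs, rfl⟩
      | one => simpa using N.one_mem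
      | mul x y hx hy ihx ihy =>
          have : e (x * y) * (x * y)⁻¹ = (e x * x⁻¹) * (x * (e y * y⁻¹) * x⁻¹) := by
            simp [mul_assoc]
          rw [this]
          exact N.mul_mem ihx (Subgroup.normalClosure_normal.conj_mem _ ihy x)
      | inv x hx ih =>
          have : e x⁻¹ * (x⁻¹)⁻¹ = (x⁻¹ * (e x * x⁻¹) * x)⁻¹ := by
            simp [mul_assoc]
          rw [this]
          exact N.inv_mem (by
            simpa using Subgroup.normalClosure_normal.conj_mem _ ih x⁻¹)
    intro x hx
    have hx1 : e x = 1 := hx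
    have := key x
    rw [hx1, one_mul] at this
    simpa using N.inv_mem this
  · -- N ≤ ker
    apply Subgroup.normalClosure_le_normal
    rintro _ ⟨s, _, rfl⟩
    simp [MonoidHom.mem_ker, he]
end

section
/- Let G be a Hausdorff topological group, S a subset of G such that the topological closure of the subgroup generated by S is all of G, and e : G → G a continuous group endomorphism that is idempotent (e ∘ e = e). Then the kernel of e equals the smallest closed normal subgroup of G containing the set { e(s) * s⁻¹ : s ∈ S } (i.e., the topological closure of the normal closure of this set). -/
/-!
If `N` is a closed normal subgroup containing every `e s * s⁻¹` with `s ∈ S`, then `π ∘ e`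
and `π`, for the projection `π` onto the Hausdorff group `G ⧸ N`, are continuous homomorphisms
agreeing on the topological generators `S`, hence equal; so `ker e ≤ N`. Conversely,
idempotence puts every `e g * g⁻¹` into `ker e`, which is closed and normal.
-/

namespace MonoidHom

variable {G : Type*} [Group G]

theorem mul_inv_mem_ker_of_idempotent {e : G →* G} (he : ∀ x : G, e (e x) = e x) (x : G) :
    e x * x⁻¹ ∈ e.ker := by
  simp [mem_ker, he]

variable [TopologicalSpace G] [IsTopologicalGroup G]

theorem eq_of_eqOn_of_topologicalClosure_eq_top {H : Type*} [Monoid H] [TopologicalSpace H]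
    [T2Space H] {S : Set G} (hS : (Subgroup.closure S).topologicalClosure = ⊤) {f g : G →* H}
    (hf : Continuous f) (hg : Continuous g) (h : Set.EqOn f g S) : f = g := by
  have hclosure : Set.EqOn f g (closure (Subgroup.closure S : Set G)) :=
    (eqOn_closure h).closure hf hg
  rw [← Subgroup.topologicalClosure_coe, hS] at hclosure
  exact ext fun x => hclosure (Subgroup.mem_top x)

theorem ker_le_of_mul_inv_mem {S : Set G} (hS : (Subgroup.closure S).topologicalClosure = ⊤)
    {e : G →* G} (hcont : Continuous e) {N : Subgroup G} [N.Normal] (hN : IsClosed (N : Set G))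
    (hSN : ∀ s ∈ S, e s * s⁻¹ ∈ N) : e.ker ≤ N := by
  have := hN
  have hquot : (QuotientGroup.mk' N).comp e = QuotientGroup.mk' N :=
    eq_of_eqOn_of_topologicalClosure_eq_top (H := G ⧸ N) hS (continuous_quot_mk.comp hcont)
      continuous_quot_mk
      fun s hs => QuotientGroup.eq_iff_div_mem.mpr (by simpa [div_eq_mul_inv] using hSN s hs)
  intro x hx
  have hx' := DFunLike.congr_fun hquot x
  simp only [coe_comp, Function.comp_apply, mem_ker.mp hx, map_one] at hx'
  exact (QuotientGroup.eq_one_iff x).mp hx'.symm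

end MonoidHom

/-- Kovács-style lemma (topological form): for a continuous idempotent endomorphism `e` of a
Hausdorff topological group `G` topologically generated by `S`, the kernel of `e` is the
smallest closed normal subgroup containing `{ e s * s⁻¹ | s ∈ S }`, i.e. the topological
closure of the normal closure of that set. -/
theorem kernel_eq_closedNormalClosure_of_idempotent {G : Type*} [Group G]
    [TopologicalSpace G] [IsTopologicalGroup G] [T2Space G]
    (S : Set G) (hS : (Subgroup.closure S).topologicalClosure = ⊤)
    (e : G →* G) (hcont : Continuous e) (he : ∀ x : G, e (e x) = e x) :
    e.ker = (Subgroup.normalClosure ((fun s => e s * s⁻¹) '' S)).topologicalClosure := by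
  have := (Subgroup.normalClosure ((fun s => e s * s⁻¹) '' S)).is_normal_topologicalClosure
  apply le_antisymm
  · exact e.ker_le_of_mul_inv_mem hS hcont (Subgroup.isClosed_topologicalClosure _)
      fun s hs => Subgroup.le_topologicalClosure _ (Subgroup.subset_normalClosure ⟨s, hs, rfl⟩)
  · refine Subgroup.topologicalClosure_minimal _ (Subgroup.normalClosure_le_normal ?_)
      (isClosed_singleton.preimage hcont)
    rintro _ ⟨s, -, rfl⟩
    exact e.mul_inv_mem_ker_of_idempotent he s
end

section
/- Let A be a finite set, φ an endomorphism of the free group F(A), and let n < m be non-negative integers. Then the rank of the image subgroup of φ^n equals the rank of the image subgroup of φ^m if and only if the restriction of φ to the image of φ^n is injective (i.e., every element x in the image of φ^n with φ(x) = 1 satisfies x = 1). -/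
/-
The restriction of `φ` maps `Im φⁿ` onto `Im φⁿ⁺¹`, so the ranks of the images decrease along
the chain, and they stay constant from `n` on when `φ` is injective on `Im φⁿ`. Conversely, if
`rank Im φⁿ = rank Im φᵐ`, the ranks of `Im φⁿ` and `Im φⁿ⁺¹` agree; as the rank of a free group
is the size of a basis (abelianize and compare ranks of free `ℤ`-modules), these free groups are
isomorphic and the restriction becomes a surjective endomorphism of the finitely generated free
group `Im φⁿ`. Free groups are residually finite (a reduced word of length `k` is detected by a
permutation of its `k + 1` positions), and a finitely generated residually finite group is Hopfian,
so this endomorphism, and hence the restriction, is injective.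
-/

noncomputable def subgroupRank {G : Type*} [Group G] (H : Subgroup G) : ℕ :=
  sInf {n : ℕ | ∃ S : Finset G, S.card = n ∧ Subgroup.closure (S : Set G) = H}

theorem subgroupRank_eq_rank {G : Type*} [Group G] (H : Subgroup G) [Group.FG H] :
    subgroupRank H = Group.rank H := by
  classical
  have hmem : Group.rank H ∈
      {n : ℕ | ∃ S : Finset G, S.card = n ∧ Subgroup.closure (S : Set G) = H} := by
    obtain ⟨T, hT, hclosure⟩ := Group.rank_spec H
    refine ⟨T.map (Function.Embedding.subtype _), by rw [Finset.card_map, hT], ?_⟩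
    rw [Finset.coe_map, Function.Embedding.coe_subtype, ← Subgroup.coe_subtype,
      ← MonoidHom.map_closure, hclosure, ← MonoidHom.range_eq_map, Subgroup.range_subtype]
  refine le_antisymm (Nat.sInf_le hmem) (le_csInf ⟨_, hmem⟩ ?_)
  rintro _ ⟨S, rfl, hS⟩
  calc Group.rank H = Group.rank (Subgroup.closure (S : Set G)) := Subgroup.rank_congr hS.symm
    _ ≤ S.card := Subgroup.rank_closure_finset_le_card S

theorem List.prod_smul_of_forall_getElem_smul {M X : Type*} [Monoid M] [MulAction M X]
    (L : List M) (x : ℕ → X) (h : ∀ j (hj : j < L.length), L[j] • x (j + 1) = x j) :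
    L.prod • x L.length = x 0 := by
  induction L generalizing x with
  | nil => simp
  | cons c L ih =>
    rw [List.prod_cons, mul_smul, List.length_cons,
      ih (fun j => x (j + 1)) fun j hj => h (j + 1) (by simp [hj])]
    exact h 0 (by simp)

namespace FreeGroup

variable {α : Type*} {L : List (α × Bool)}

theorem IsReduced.getElem?_succ_ne (hL : IsReduced L) {j : ℕ} {a : α} {b : Bool}
    (hj : L[j]? = some (a, b)) : L[j + 1]? ≠ some (a, !b) := by
  intro hj'
  obtain ⟨hlt', hj'⟩ := List.getElem?_eq_some_iff.mp hj'
  obtain ⟨_, hj⟩ := List.getElem?_eq_some_iff.mp hj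
  simpa [hj, hj'] using List.IsChain.getElem hL j hlt'

/- The positions `0, …, L.length` of a word `L` are permuted so that the letter `L[j]` carries
position `j + 1` to position `j`: the generator `a` moves `j + 1` down to `j` when
`L[j] = (a, true)` and `j` up to `j + 1` when `L[j] = (a, false)`. Because `L` is reduced, these
moves form a partial injection, which is then extended to a permutation. -/
open Classical in
variable (L) in
noncomputable def moveAlong (a : α) (p : ℕ) : ℕ :=
  if p ≠ 0 ∧ L[p - 1]? = some (a, true) then p - 1 else p + 1

variable (L) in
def IsMoveSource (a : α) (p : ℕ) : Prop :=
  (p ≠ 0 ∧ L[p - 1]? = some (a, true)) ∨ L[p]? = some (a, false)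

theorem moveAlong_lt {a : α} {p : ℕ} (hp : IsMoveSource L a p) :
    moveAlong L a p < L.length + 1 := by
  unfold moveAlong
  split_ifs with h
  · have := (List.getElem?_eq_some_iff.mp h.2).1
    omega
  · have := (List.getElem?_eq_some_iff.mp (hp.resolve_left h)).1
    omega

theorem IsReduced.moveAlong_injOn (hL : IsReduced L) (a : α) :
    Set.InjOn (moveAlong L a) {p | IsMoveSource L a p} := by
  have down_ne_up : ∀ p q, IsMoveSource L a q → L[p - 1]? = some (a, true) →
      ¬(q ≠ 0 ∧ L[q - 1]? = some (a, true)) → p - 1 ≠ q + 1 := by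
    intro p q hq hp hq' hpq
    refine hL.getElem?_succ_ne (hq.resolve_left hq') ?_
    rwa [← hpq]
  intro p hp q hq hpq
  unfold moveAlong at hpq
  split_ifs at hpq with h₁ h₂ h₂
  · omega
  · exact absurd hpq (down_ne_up p q hq h₁.2 h₂)
  · exact absurd hpq.symm (down_ne_up q p hp h₂.2 h₁)
  · omega

open Classical in
variable (L) in
noncomputable def movePerm (hL : IsReduced L) (a : α) : Equiv.Perm (Fin (L.length + 1)) :=
  (Equiv.ofInjective (fun p : {p : Fin (L.length + 1) // IsMoveSource L a p} =>
      (⟨moveAlong L a p, moveAlong_lt p.2⟩ : Fin (L.length + 1)))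
    fun p q h => Subtype.ext <| Fin.ext <| hL.moveAlong_injOn a p.2 q.2 (congrArg Fin.val h)
    ).extendSubtype

open Classical in
theorem movePerm_apply (hL : IsReduced L) {a : α} {p : Fin (L.length + 1)}
    (hp : IsMoveSource L a p) : (movePerm L hL a p : ℕ) = moveAlong L a p := by
  rw [movePerm, Equiv.extendSubtype_apply_of_mem]
  · rfl
  · exact hp

theorem movePerm_letter (hL : IsReduced L) {j : ℕ} (hj : j < L.length) :
    cond L[j].2 (movePerm L hL L[j].1) (movePerm L hL L[j].1)⁻¹ ⟨j + 1, by omega⟩ =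
      ⟨j, by omega⟩ := by
  generalize hLj : L[j] = c
  obtain ⟨a, b⟩ := c
  have hj' : L[j]? = some (a, b) := by rw [List.getElem?_eq_getElem hj, hLj]
  cases b
  · rw [cond_false, Equiv.Perm.inv_eq_iff_eq]
    have hsrc : IsMoveSource L a j := Or.inr hj'
    refine Fin.ext ?_
    rw [movePerm_apply hL hsrc, moveAlong, if_neg]
    rintro ⟨hj0, hprev⟩
    exact hL.getElem?_succ_ne hprev (by rwa [Nat.sub_add_cancel (Nat.pos_of_ne_zero hj0)])
  · have hsrc : IsMoveSource L a (j + 1) := Or.inl ⟨j.succ_ne_zero, hj'⟩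
    refine Fin.ext ?_
    rw [cond_true, movePerm_apply hL hsrc, moveAlong, if_pos ⟨j.succ_ne_zero, hj'⟩]
    rfl

instance : Group.ResiduallyFinite (FreeGroup α) := by
  classical
  refine Group.residuallyFinite_of_forall_exists_finite_monoidHom.{_, 0} fun x hx => ?_
  set L := x.toWord
  have hL : IsReduced L := isReduced_toWord
  have hofNat : ∀ i (hi : i < L.length + 1), Fin.ofNat (L.length + 1) i = ⟨i, hi⟩ :=
    fun i hi => Fin.ext (Nat.mod_eq_of_lt hi)
  have hprod := List.prod_smul_of_forall_getElem_smul
    (L.map fun c => cond c.2 (movePerm L hL c.1) (movePerm L hL c.1)⁻¹)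
    (Fin.ofNat (L.length + 1)) fun j hj => by
      rw [List.length_map] at hj
      rw [List.getElem_map, Equiv.Perm.smul_def, hofNat (j + 1) (by omega), hofNat j (by omega)]
      exact movePerm_letter hL hj
  rw [← lift_mk, mk_toWord, List.length_map, hofNat _ L.length.lt_succ_self,
    hofNat 0 L.length.succ_pos] at hprod
  refine ⟨_, _, inferInstance, lift (movePerm L hL), fun h => hx ?_⟩
  rwa [h, one_smul, Fin.mk.injEq, List.length_eq_zero_iff, toWord_eq_nil_iff] at hprod

end FreeGroup

theorem finite_monoidHom_of_fg {G Q : Type*} [Group G] [Group Q] [Group.FG G] [Finite Q] :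
    Finite (G →* Q) := by
  obtain ⟨α, _, π, hπ⟩ := Group.fg_iff_exists_freeGroup_hom_surjective_finite.mp ‹Group.FG G›
  exact .of_injective (fun f : G →* Q => FreeGroup.lift.symm (f.comp π))
    fun _ _ h => (MonoidHom.cancel_right hπ).mp (FreeGroup.lift.symm.injective h)

theorem Group.ResiduallyFinite.injective_of_surjective {G : Type*} [Group G] [Group.FG G]
    [Group.ResiduallyFinite G] {f : G →* G} (hf : Function.Surjective f) :
    Function.Injective f := by
  refine (injective_iff_map_eq_one f).mpr fun y hy => by_contra fun hy₁ => ?_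
  obtain ⟨N, hyN⟩ := Group.exists_finiteIndexNormalSubgroup_notMem y hy₁
  have : Finite (G →* G ⧸ N.toSubgroup) := finite_monoidHom_of_fg
  -- precomposing with `f` is injective on the finite set `Hom(G, G ⧸ N)`, hence surjective
  obtain ⟨g, hg⟩ := Finite.injective_iff_surjective.mp
    (fun _ _ => (MonoidHom.cancel_right hf).mp) (QuotientGroup.mk' N.toSubgroup)
  apply hyN
  rw [← N.mem_toSubgroup_iff, ← QuotientGroup.eq_one_iff, ← QuotientGroup.mk'_apply, ← hg,
    MonoidHom.comp_apply, hy, map_one]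

namespace FreeGroup

variable {α β : Type*}

theorem exists_surjective_freeAbelianGroup_linearMap {f : FreeGroup α →* FreeGroup β}
    (hf : Function.Surjective f) :
    ∃ g : FreeAbelianGroup α →ₗ[ℤ] FreeAbelianGroup β, Function.Surjective g :=
  ⟨(MonoidHom.toAdditive (Abelianization.map f)).toIntLinearMap, by
    intro x
    obtain ⟨y, rfl⟩ := QuotientGroup.mk_surjective (Additive.toMul x)
    obtain ⟨z, rfl⟩ := hf y
    exact ⟨Additive.ofMul (Abelianization.of z), rfl⟩⟩

theorem finite_of_surjective [Finite α] {f : FreeGroup α →* FreeGroup β}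
    (hf : Function.Surjective f) : Finite β := by
  obtain ⟨g, hg⟩ := exists_surjective_freeAbelianGroup_linearMap hf
  have : Module.Finite ℤ (FreeAbelianGroup α) := .of_basis (FreeAbelianGroup.basis α)
  have : Module.Finite ℤ (FreeAbelianGroup β) := .of_surjective g hg
  exact Module.Finite.finite_basis (FreeAbelianGroup.basis β)

theorem card_le_of_surjective [Finite α] {f : FreeGroup α →* FreeGroup β}
    (hf : Function.Surjective f) : Nat.card β ≤ Nat.card α := by
  obtain ⟨g, hg⟩ := exists_surjective_freeAbelianGroup_linearMap hf
  have : Module.Finite ℤ (FreeAbelianGroup α) := .of_basis (FreeAbelianGroup.basis α)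
  rw [← Module.finrank_eq_nat_card_basis (FreeAbelianGroup.basis α),
    ← Module.finrank_eq_nat_card_basis (FreeAbelianGroup.basis β)]
  exact LinearMap.finrank_le_finrank_of_surjective hg

theorem rank_eq_card [Finite α] : Group.rank (FreeGroup α) = Nat.card α := by
  classical
  have := Fintype.ofFinite α
  refine le_antisymm ?_ ?_
  · calc Group.rank (FreeGroup α) ≤ (Finset.univ.image of).card := by
          refine Group.rank_le ?_
          rw [Finset.coe_image, Finset.coe_univ, Set.image_univ, closure_range_of]
      _ ≤ Finset.univ.card := Finset.card_image_le
      _ = Nat.card α := by rw [Finset.card_univ, Nat.card_eq_fintype_card]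
  · obtain ⟨S, hS, hclosure⟩ := Group.rank_spec (FreeGroup α)
    have hsurj :
        Function.Surjective (lift (Subtype.val : ↥(S : Set (FreeGroup α)) → FreeGroup α)) := by
      rw [← MonoidHom.range_eq_top, ← closure_eq_range, hclosure]
    calc Nat.card α ≤ Nat.card (S : Set (FreeGroup α)) := card_le_of_surjective hsurj
      _ = Group.rank (FreeGroup α) := by rw [Nat.card_coe_set_eq, Set.ncard_coe_finset, hS]

end FreeGroup

namespace IsFreeGroup

variable {G H : Type*} [Group G] [Group H] [IsFreeGroup G] [Group.FG G]

theorem finite_generators : Finite (Generators G) := by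
  obtain ⟨α, _, f, hf⟩ := Group.fg_iff_exists_freeGroup_hom_surjective_finite.mp ‹Group.FG G›
  exact FreeGroup.finite_of_surjective (f := (toFreeGroup G).toMonoidHom.comp f)
    ((toFreeGroup G).surjective.comp hf)

theorem rank_eq_card_generators : Group.rank G = Nat.card (Generators G) := by
  have := finite_generators (G := G)
  rw [Group.rank_congr (toFreeGroup G), FreeGroup.rank_eq_card]

theorem nonempty_mulEquiv_of_rank_eq [IsFreeGroup H] [Group.FG H]
    (h : Group.rank G = Group.rank H) : Nonempty (G ≃* H) := by
  have := finite_generators (G := G)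
  have := finite_generators (G := H)
  rw [rank_eq_card_generators, rank_eq_card_generators, Finite.card_eq] at h
  obtain ⟨e⟩ := h
  exact ⟨(toFreeGroup G).trans ((FreeGroup.freeGroupCongr e).trans (toFreeGroup H).symm)⟩

theorem injective_of_surjective_of_rank_eq [IsFreeGroup H] [Group.FG H]
    [Group.ResiduallyFinite G] {p : G →* H} (hp : Function.Surjective p)
    (h : Group.rank G = Group.rank H) : Function.Injective p := by
  obtain ⟨e⟩ := nonempty_mulEquiv_of_rank_eq h.symm
  have hsurj : Function.Surjective (e.toMonoidHom.comp p) := e.surjective.comp hp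
  exact Function.Injective.of_comp (f := e) (Group.ResiduallyFinite.injective_of_surjective hsurj)

end IsFreeGroup

namespace Monoid.End

variable {G : Type*} [Group G] (φ : Monoid.End G)

theorem range_pow_antitone {k l : ℕ} (h : k ≤ l) :
    MonoidHom.range (φ ^ l) ≤ MonoidHom.range (φ ^ k) := by
  rintro _ ⟨y, rfl⟩
  refine ⟨(φ ^ (l - k)) y, ?_⟩
  change (φ ^ k * φ ^ (l - k)) y = _
  rw [← pow_add, Nat.add_sub_cancel' h]
  rfl

theorem range_pow_succ (k : ℕ) :
    MonoidHom.range (φ ^ (k + 1)) =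
      ((φ : G →* G).domRestrict (MonoidHom.range (φ ^ k))).range := by
  rw [pow_succ']
  exact (MonoidHom.range_comp φ (φ ^ k)).trans (MonoidHom.domRestrict_range _ _).symm

theorem injective_domRestrict_range_pow_iff (k : ℕ) :
    Function.Injective ((φ : G →* G).domRestrict (MonoidHom.range (φ ^ k))) ↔
      ∀ x ∈ MonoidHom.range (φ ^ k), φ x = 1 → x = 1 := by
  rw [injective_iff_map_eq_one]
  exact ⟨fun h x hx hφx => congrArg Subtype.val (h ⟨x, hx⟩ hφx),
    fun h x hx => Subtype.ext (h x x.2 hx)⟩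

variable [Group.FG G]

theorem rank_range_pow_succ_le (k : ℕ) :
    Group.rank (MonoidHom.range (φ ^ (k + 1))) ≤ Group.rank (MonoidHom.range (φ ^ k)) :=
  (Subgroup.rank_congr (range_pow_succ φ k)).trans_le Group.rank_range_le

theorem rank_range_pow_antitone : Antitone fun k => Group.rank (MonoidHom.range (φ ^ k)) :=
  antitone_nat_of_succ_le (rank_range_pow_succ_le φ)

theorem rank_range_pow_eq_of_injective {n : ℕ}
    (h : Function.Injective ((φ : G →* G).domRestrict (MonoidHom.range (φ ^ n))))
    {k : ℕ} (hk : n ≤ k) :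
    Group.rank (MonoidHom.range (φ ^ k)) = Group.rank (MonoidHom.range (φ ^ n)) := by
  induction k, hk using Nat.le_induction with
  | base => rfl
  | succ k hk ih =>
    have hinj := (injective_domRestrict_range_pow_iff φ k).mpr fun x hx =>
      (injective_domRestrict_range_pow_iff φ n).mp h x (range_pow_antitone φ hk hx)
    rw [← ih, Subgroup.rank_congr (range_pow_succ φ k)]
    exact (Group.rank_congr (MonoidHom.ofInjective hinj)).symm

theorem injective_domRestrict_of_rank_eq [IsFreeGroup G] [Group.ResiduallyFinite G] {n m : ℕ}
    (hnm : n < m)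
    (h : Group.rank (MonoidHom.range (φ ^ n)) = Group.rank (MonoidHom.range (φ ^ m))) :
    Function.Injective ((φ : G →* G).domRestrict (MonoidHom.range (φ ^ n))) := by
  have hsucc : Group.rank (MonoidHom.range (φ ^ n)) =
      Group.rank ((φ : G →* G).domRestrict (MonoidHom.range (φ ^ n))).range := by
    rw [← Subgroup.rank_congr (range_pow_succ φ n)]
    exact le_antisymm (h.trans_le (rank_range_pow_antitone φ hnm)) (rank_range_pow_succ_le φ n)
  exact MonoidHom.rangeRestrict_injective_iff.mp <|
    IsFreeGroup.injective_of_surjective_of_rank_eq (MonoidHom.rangeRestrict_surjective _) hsucc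

end Monoid.End

/-- For an endomorphism `φ` of a free group of finite rank and `n < m`, the images of `φ^n`
and `φ^m` are free groups of the same rank if and only if the restriction of `φ` to the
image of `φ^n` is injective. -/
theorem rank_image_pow_eq_iff_restriction_injective {A : Type} [Finite A]
    (φ : Monoid.End (FreeGroup A)) (n m : ℕ) (hnm : n < m) :
    subgroupRank (MonoidHom.range (φ ^ n)) = subgroupRank (MonoidHom.range (φ ^ m)) ↔
      ∀ x ∈ MonoidHom.range (φ ^ n), φ x = 1 → x = 1 := by
  rw [subgroupRank_eq_rank, subgroupRank_eq_rank,
    ← Monoid.End.injective_domRestrict_range_pow_iff]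
  exact ⟨φ.injective_domRestrict_of_rank_eq hnm,
    fun h => (φ.rank_range_pow_eq_of_injective h hnm.le).symm⟩
end

section
/- Let P be a class of finite groups (a property of finite groups invariant under group isomorphism) that is closed under taking subgroups, quotient groups, and finite direct products, and which is extension-closed: whenever N is a normal subgroup of a finite group G such that both N and G/N satisfy P, then G satisfies P. If P holds for some group with more than one element, then every finite group L satisfying P embeds (via an injective group homomorphism) into a finite group G satisfying P that is generated by at most 2 elements. -/
/-!
Let `e` be the exponent of `L`, i.e. the order of `id` in `L → L`, and `n = |L|`. In `B = L ≀ C_e`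
every diagonal element `Δ g` is a commutator `⁅t, u_g⁆`, where `t` generates `C_e` and
`u_g c = g ^ c`. In `W = B ≀ C_N` with `N > 4n`, let `β` carry the letters `u_g` at the positions
`0, …, n - 1` and `t` at position `2n`.
The shift by `2n - i` moves exactly one of these positions, namely `i`, onto another one, so the
commutator of two shifts of `β` (conjugates of `β` by powers of the generator `τ` of `C_N`) is
supported at a single coordinate, where it equals `Δ g`. Hence `⟨τ, β⟩` contains a copy of `L`.
With `N` a power of `e`, `W` lies in the class: `C_e` is a cyclic subgroup of `L ^ L`, `C_{e ^ k}`
is an iterated extension of copies of `C_e`, and wreath products are split extensions of direct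
powers.
-/

open SemidirectProduct Multiplicative
open scoped commutatorElement

instance {N G : Type*} [Group N] [Group G] [Finite N] [Finite G] {φ : G →* MulAut N} :
    Finite (N ⋊[φ] G) :=
  Finite.of_equiv _ equivProd.symm

theorem card_multiplicative_zmod (n : ℕ) : Nat.card (Multiplicative (ZMod n)) = n :=
  Nat.card_zmod n

def MulEquiv.piOptionEquivProd (α Q : Type*) [Group Q] : (Option α → Q) ≃* Q × (α → Q) :=
  { Equiv.piOptionEquivProd with map_mul' := fun _ _ => rfl }

theorem pow_orderOf_id {M : Type*} [Monoid M] (g : M) : g ^ orderOf (id : M → M) = 1 :=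
  congrFun (pow_orderOf_eq_one (id : M → M)) g

theorem one_lt_orderOf_id {G : Type*} [Group G] [Finite G] [Nontrivial G] :
    1 < orderOf (id : G → G) := by
  obtain ⟨g, hg⟩ := exists_ne (1 : G)
  refine Nat.lt_of_le_of_ne (orderOf_pos _) fun h => hg ?_
  exact congrFun (orderOf_eq_one_iff.1 h.symm) g

namespace Subgroup

variable {G : Type*} [Group G]

theorem commutatorElement_mem {H : Subgroup G} {x y : G} (hx : x ∈ H) (hy : y ∈ H) :
    ⁅x, y⁆ ∈ H := by
  rw [commutatorElement_def]
  exact H.mul_mem (H.mul_mem (H.mul_mem hx hy) (H.inv_mem hx)) (H.inv_mem hy)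

theorem exists_closure_pair_eq_top (x y : G) :
    ∃ a b : closure {x, y}, closure {a, b} = ⊤ := by
  refine ⟨⟨x, subset_closure (by simp)⟩, ⟨y, subset_closure (by simp)⟩, ?_⟩
  rw [← closure_closure_coe_preimage]
  congr 1
  ext
  simp [Subtype.ext_iff]

end Subgroup

namespace NeumannEmbedding

section Wreath

variable (Q A : Type*) [Group Q] [AddGroup A]

def shiftAut : Multiplicative A →* MulAut (A → Q) where
  toFun s :=
    { toFun := fun x c => x (c + s.toAdd)
      invFun := fun x c => x (c - s.toAdd)
      left_inv := fun x => by simp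
      right_inv := fun x => by simp
      map_mul' := fun _ _ => rfl }
  map_one' := by ext; simp
  map_mul' _ _ := by ext; simp [add_assoc]

abbrev Wreath := (A → Q) ⋊[shiftAut Q A] Multiplicative A

variable {Q A}

theorem inr_mul_inl_mul_inr_inv (d : A) (x : A → Q) :
    (inr (ofAdd d) : Wreath Q A) * inl x * (inr (ofAdd d))⁻¹ = inl (fun c => x (c + d)) := by
  rw [← map_inv, ← inl_aut]
  rfl

theorem commutatorElement_inr_inl (d : A) (x : A → Q) :
    ⁅(inr (ofAdd d) : Wreath Q A), inl x⁆ =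
      (inl (fun c => x (c + d) * (x c)⁻¹) : Wreath Q A) := by
  rw [commutatorElement_def, inr_mul_inl_mul_inr_inv, ← map_inv, ← map_mul]
  rfl

end Wreath

section Diagonal

variable (L : Type*) [Group L] (e : ℕ)

def diagonal : L →* Wreath L (ZMod e) := inl.comp (Pi.constMonoidHom (ZMod e) L)

variable {L e}

theorem diagonal_injective : Function.Injective (diagonal L e) :=
  fun _ _ h => congrFun (inl_injective h) 0

theorem commutatorElement_inr_inl_pow [NeZero e] {g : L} (hg : g ^ e = 1) :
    ⁅(inr (ofAdd 1) : Wreath L (ZMod e)), (inl (fun c => g ^ c.val) : Wreath L (ZMod e))⁆ =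
      diagonal L e g := by
  rw [commutatorElement_inr_inl]
  refine congrArg inl (funext fun c => ?_)
  have hmod : (c + 1).val ≡ c.val + 1 [MOD orderOf g] :=
    ((ZMod.natCast_eq_natCast_iff _ _ _).1 (by simp)).of_dvd (orderOf_dvd_of_pow_eq_one hg)
  rw [pow_eq_pow_iff_modEq.2 hmod, pow_succ', mul_inv_cancel_right]
  rfl

end Diagonal

section Spread

variable {B : Type*} [Group B] {n N : ℕ}

def positions (n N : ℕ) : Set (ZMod N) := {c | c.val < n ∨ c.val = 2 * n}

def spread (a : Fin n → B) (t : B) (c : ZMod N) : B :=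
  if h : c.val < n then a ⟨c.val, h⟩ else if c.val = 2 * n then t else 1

theorem mem_positions_of_spread_ne_one {a : Fin n → B} {t : B} {c : ZMod N}
    (h : spread a t c ≠ 1) : c ∈ positions n N := by
  unfold spread at h
  split_ifs at h with h₁ h₂
  exacts [.inl h₁, .inr h₂, absurd rfl h]

theorem eq_zero_of_add_mem_positions (hN : 4 * n < N) {i : ℕ} (hi : i < n) {c : ZMod N}
    (h₁ : c + i ∈ positions n N) (h₂ : c + ((2 * n : ℕ) : ZMod N) ∈ positions n N) :
    c = 0 := by
  have : NeZero N := ⟨by omega⟩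
  set x := c + i
  have hc : c = x - i := eq_sub_of_add_eq rfl
  have hshift : c + ((2 * n : ℕ) : ZMod N) = x + ((2 * n - i : ℕ) : ZMod N) := by
    rw [hc, Nat.cast_sub (by omega)]
    ring
  have hval : (x + ((2 * n - i : ℕ) : ZMod N)).val = x.val + (2 * n - i) := by
    rw [ZMod.val_add_of_lt] <;> rw [ZMod.val_natCast_of_lt (by omega)]
    exact h₁.elim (by omega) (by omega)
  rw [hshift] at h₂
  change _ < n ∨ _ = 2 * n at h₂
  rw [hval] at h₂
  have hx : x.val = i := by
    rcases h₁ with h₁ | h₁ <;> omega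
  rw [hc, ← ZMod.natCast_zmod_val x, hx, sub_self]

theorem commutatorElement_spread_shifts (hN : 4 * n < N) (a : Fin n → B) (t : B) (i : Fin n) :
    (fun c : ZMod N =>
        ⁅spread a t (c + ((2 * n : ℕ) : ZMod N)), spread a t (c + ((i : ℕ) : ZMod N))⁆) =
      Pi.mulSingle 0 ⁅t, a i⁆ := by
  funext c
  rcases eq_or_ne c 0 with rfl | hc
  · have h2n : ((2 * n : ℕ) : ZMod N).val = 2 * n := ZMod.val_natCast_of_lt (by omega)
    have hi : ((i : ℕ) : ZMod N).val = i := ZMod.val_natCast_of_lt (by omega)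
    rw [zero_add, zero_add]
    unfold spread
    rw [h2n, hi, dif_neg (by omega), if_pos rfl, dif_pos i.isLt, Pi.mulSingle_eq_same]
  · rw [Pi.mulSingle_eq_of_ne (M := fun _ => B) hc]
    by_contra h
    have h₁ : spread a t (c + ((i : ℕ) : ZMod N)) ≠ 1 := fun h' =>
      h (by rw [h', commutatorElement_one_right])
    have h₂ : spread a t (c + ((2 * n : ℕ) : ZMod N)) ≠ 1 := fun h' =>
      h (by rw [h', commutatorElement_one_left])
    exact hc (eq_zero_of_add_mem_positions hN i.isLt (mem_positions_of_spread_ne_one h₁)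
      (mem_positions_of_spread_ne_one h₂))

theorem inl_mulSingle_mem_closure (hN : 4 * n < N) (a : Fin n → B) (t : B) (i : Fin n) :
    (inl (Pi.mulSingle 0 ⁅t, a i⁆) : Wreath B (ZMod N)) ∈
      Subgroup.closure {inr (ofAdd 1), inl (spread a t)} := by
  have : NeZero N := ⟨by omega⟩
  set H := Subgroup.closure {(inr (ofAdd 1) : Wreath B (ZMod N)), inl (spread a t)}
  have hinr (d : ZMod N) : (inr (ofAdd d) : Wreath B (ZMod N)) ∈ H := by
    have hd : (inr (ofAdd d) : Wreath B (ZMod N)) = inr (ofAdd 1) ^ d.val := by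
      rw [← map_pow, ← ofAdd_nsmul, nsmul_one, ZMod.natCast_zmod_val]
    exact hd ▸ H.pow_mem (Subgroup.subset_closure (by simp)) _
  have hshift (d : ZMod N) : (inl (fun c => spread a t (c + d)) : Wreath B (ZMod N)) ∈ H := by
    rw [← inr_mul_inl_mul_inr_inv]
    exact H.mul_mem (H.mul_mem (hinr d) (Subgroup.subset_closure (by simp))) (H.inv_mem (hinr d))
  rw [← commutatorElement_spread_shifts hN]
  exact (map_commutatorElement (inl : (ZMod N → B) →* Wreath B (ZMod N)) _ _).symm ▸
    Subgroup.commutatorElement_mem (hshift _) (hshift _)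

end Spread

theorem exists_injective_closure_pair {L : Type*} [Group L] [Finite L] {e N : ℕ} [NeZero e]
    (he : ∀ g : L, g ^ e = 1) (hN : 4 * Nat.card L < N) :
    ∃ x y : Wreath (Wreath L (ZMod e)) (ZMod N),
      ∃ f : L →* Subgroup.closure {x, y}, Function.Injective f := by
  let enum := (Finite.equivFin L).symm
  let a : Fin (Nat.card L) → Wreath L (ZMod e) := fun i => inl (fun c => enum i ^ c.val)
  let j : L →* Wreath (Wreath L (ZMod e)) (ZMod N) :=
    inl.comp ((MonoidHom.mulSingle _ 0).comp (diagonal L e))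
  have hj (g : L) : j g ∈ Subgroup.closure {inr (ofAdd 1), inl (spread a (inr (ofAdd 1)))} := by
    have h := inl_mulSingle_mem_closure hN a (inr (ofAdd 1)) (enum.symm g)
    rwa [commutatorElement_inr_inl_pow (he _), Equiv.apply_symm_apply] at h
  refine ⟨_, _, j.codRestrict _ hj, (j.injective_codRestrict _ hj).2 ?_⟩
  exact inl_injective.comp ((Pi.mulSingle_injective 0).comp diagonal_injective)

structure IsExtensionClosedClass (P : ∀ (G : Type) [Group G] [Finite G], Prop) : Prop where
  iso : ∀ (G : Type) [Group G] [Finite G] (H : Type) [Group H] [Finite H], (G ≃* H) → P G → P H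
  subgroup : ∀ (G : Type) [Group G] [Finite G], P G → ∀ H : Subgroup G, P H
  prod : ∀ (G : Type) [Group G] [Finite G] (H : Type) [Group H] [Finite H],
    P G → P H → P (G × H)
  ext : ∀ (G : Type) [Group G] [Finite G] (N : Subgroup G) (_ : N.Normal),
    P N → P (G ⧸ N) → P G

namespace IsExtensionClosedClass

variable {P : ∀ (G : Type) [Group G] [Finite G], Prop} (hP : IsExtensionClosedClass P)
include hP

theorem pi {Q : Type} [Group Q] [Finite Q] (hQ : P Q) (I : Type) [Finite I] : P (I → Q) := by
  refine Finite.induction_empty_option (P := fun I => ∀ [Finite I], P (I → Q))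
    (fun e h _ => ?_) (hP.iso _ _ MulEquiv.ofUnique (hP.subgroup Q hQ ⊥))
    (fun h => hP.iso _ _ (MulEquiv.piOptionEquivProd _ Q).symm (hP.prod _ _ hQ h)) I
  have := Finite.of_equiv _ e.symm
  exact hP.iso _ _ (MulEquiv.arrowCongr e (MulEquiv.refl Q)) h

theorem semidirectProduct {N H : Type} [Group N] [Finite N] [Group H] [Finite H]
    (φ : H →* MulAut N) (hN : P N) (hH : P H) : P (N ⋊[φ] H) :=
  hP.ext _ rightHom.ker rightHom.normal_ker
    (hP.iso _ _ ((MonoidHom.ofInjective inl_injective).trans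
      (MulEquiv.subgroupCongr range_inl_eq_ker_rightHom)) hN)
    (hP.iso _ _ (QuotientGroup.quotientKerEquivOfSurjective _ rightHom_surjective).symm hH)

theorem wreath {Q A : Type} [Group Q] [Finite Q] [AddGroup A] [Finite A] (hQ : P Q)
    (hA : P (Multiplicative A)) : P (Wreath Q A) :=
  hP.semidirectProduct _ (hP.pi hQ A) hA

theorem of_isCyclic {C D : Type} [Group C] [Finite C] [IsCyclic C] [Group D] [Finite D]
    [IsCyclic D] (hcard : Nat.card C = Nat.card D) (hC : P C) : P D :=
  hP.iso _ _ (mulEquivOfCyclicCardEq hcard) hC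

theorem zmod_mul {a b : ℕ} [NeZero a] [NeZero b] (ha : P (Multiplicative (ZMod a)))
    (hb : P (Multiplicative (ZMod b))) : P (Multiplicative (ZMod (a * b))) := by
  let f : Multiplicative (ZMod (a * b)) →* Multiplicative (ZMod a) :=
    (ZMod.castHom (dvd_mul_right a b) (ZMod a)).toAddMonoidHom.toMultiplicative
  let q := QuotientGroup.quotientKerEquivOfSurjective f
    (ZMod.castHom_surjective (dvd_mul_right a b))
  have hcard : Nat.card (Multiplicative (ZMod b)) = Nat.card f.ker := by
    have h := f.ker.card_eq_card_quotient_mul_card_subgroup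
    rw [Nat.card_congr q.toEquiv, card_multiplicative_zmod, card_multiplicative_zmod] at h
    rw [card_multiplicative_zmod]
    exact Nat.eq_of_mul_eq_mul_left (Nat.pos_of_neZero a) h
  exact hP.ext _ f.ker f.normal_ker (hP.of_isCyclic hcard hb) (hP.iso _ _ q.symm ha)

theorem zmod_pow_succ {e : ℕ} [NeZero e] (he : P (Multiplicative (ZMod e))) (k : ℕ) :
    P (Multiplicative (ZMod (e ^ (k + 1)))) := by
  induction k with
  | zero => exact hP.of_isCyclic (by simp) he
  | succ k ih => exact hP.of_isCyclic (by simp [pow_succ]) (hP.zmod_mul ih he)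

end IsExtensionClosedClass

end NeumannEmbedding

theorem embeds_into_two_generated_member_general
    (P : ∀ (G : Type) [Group G] [Finite G], Prop)
    (hiso : ∀ (G : Type) [Group G] [Finite G] (H : Type) [Group H] [Finite H],
      (G ≃* H) → P G → P H)
    (hsub : ∀ (G : Type) [Group G] [Finite G], P G → ∀ H : Subgroup G, P H)
    (hprod : ∀ (G : Type) [Group G] [Finite G] (H : Type) [Group H] [Finite H],
      P G → P H → P (G × H))
    (hext : ∀ (G : Type) [Group G] [Finite G] (N : Subgroup G) (_ : N.Normal),
      P N → P (G ⧸ N) → P G)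
    (L : Type) [Group L] [Finite L] (hL : P L) :
    ∃ (G : Type) (_ : Group G) (_ : Finite G),
      P G ∧ (∃ x y : G, Subgroup.closure {x, y} = ⊤) ∧
        ∃ f : L →* G, Function.Injective f := by
  have hP : NeumannEmbedding.IsExtensionClosedClass P := ⟨hiso, hsub, hprod, hext⟩
  rcases subsingleton_or_nontrivial L with _ | _
  · exact ⟨L, _, _, hL, ⟨1, 1, Subsingleton.elim _ _⟩, MonoidHom.id L, Function.injective_id⟩
  set e := orderOf (id : L → L)
  have : NeZero e := ⟨(orderOf_pos _).ne'⟩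
  have hPe : P (Multiplicative (ZMod e)) :=
    hP.of_isCyclic (by rw [Nat.card_zpowers, card_multiplicative_zmod])
      (hP.subgroup _ (hP.pi hL L) (Subgroup.zpowers id))
  have hN : 4 * Nat.card L < e ^ (4 * Nat.card L + 1) :=
    (Nat.lt_succ_self _).trans (Nat.lt_pow_self one_lt_orderOf_id)
  obtain ⟨x, y, f, hf⟩ := NeumannEmbedding.exists_injective_closure_pair pow_orderOf_id hN
  obtain ⟨a, b, hab⟩ := Subgroup.exists_closure_pair_eq_top x y
  exact ⟨_, _, _, hP.subgroup _ (hP.wreath (hP.wreath hL hPe) (hP.zmod_pow_succ hPe _)) _,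
    ⟨a, b, hab⟩, f, hf⟩

/-- Every member of a non-trivial extension-closed pseudovariety of finite groups embeds
into a 2-generated member of the pseudovariety (Neumann–Neumann embedding). -/
theorem embeds_into_two_generated_member
    (P : ∀ (G : Type) [Group G] [Finite G], Prop)
    (hiso : ∀ (G : Type) [Group G] [Finite G] (H : Type) [Group H] [Finite H],
      (G ≃* H) → P G → P H)
    (hsub : ∀ (G : Type) [Group G] [Finite G], P G → ∀ H : Subgroup G, P H)
    (hquot : ∀ (G : Type) [Group G] [Finite G], P G →
      ∀ (N : Subgroup G) (_ : N.Normal), P (G ⧸ N))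
    (hprod : ∀ (G : Type) [Group G] [Finite G] (H : Type) [Group H] [Finite H],
      P G → P H → P (G × H))
    (hext : ∀ (G : Type) [Group G] [Finite G] (N : Subgroup G) (_ : N.Normal),
      P N → P (G ⧸ N) → P G)
    (hnontriv : ∃ (G : Type) (_ : Group G) (_ : Finite G), P G ∧ Nontrivial G)
    (L : Type) [Group L] [Finite L] (hL : P L) :
    ∃ (G : Type) (_ : Group G) (_ : Finite G),
      P G ∧ (∃ x y : G, Subgroup.closure {x, y} = ⊤) ∧
        ∃ f : L →* G, Function.Injective f :=
  embeds_into_two_generated_member_general P hiso hsub hprod hext L hL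
end

section
/- Let A be a finite alphabet with at least 2 letters and φ : A* → A* a primitive substitution that is unimodular, i.e., det(M(φ)) = 1 or −1. Then φ is aperiodic: there is no nonempty word w ∈ A* such that every word in the language L(φ) is a factor of some power w^k of w. -/
/-! A nonempty period `w` with Parikh vector `v` forces every word of the language to have
letter counts within a bounded error of `(length / |w|) • v`. Applied to the iterates `φᵐ(a)`,
whose lengths are unbounded by primitivity and whose Parikh vectors evolve by the incidence
matrix `M`, this makes `v` a left eigenvector of `M` for a rational eigenvalue `μ`. As `M` is an
integer matrix with integer inverse, `μ` and `μ⁻¹` are algebraic integers, so `μ = ±1`; but a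
power `Mⁿ` has positive entries, which forces `μⁿ ≥ |A| ≥ 2`. -/

/-- `u` is a factor of `v`: `u` occurs as a contiguous subword of `v`. -/
def IsFactor {A : Type*} (u v : FreeMonoid A) : Prop :=
  ∃ s t : FreeMonoid A, v = s * u * t

namespace Matrix

variable {ι : Type*} [Fintype ι] [DecidableEq ι]

theorem vecMul_pow_eq_pow_smul {R : Type*} [CommSemiring R] {N : Matrix ι ι R} {v : ι → R}
    {μ : R} (h : v ᵥ* N = μ • v) (n : ℕ) : v ᵥ* N ^ n = μ ^ n • v := by
  induction n with
  | zero => simp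
  | succ n ih => rw [pow_succ, ← vecMul_vecMul, ih, smul_vecMul, h, smul_smul, pow_succ]

omit [DecidableEq ι] in
theorem card_mul_sum_le_sum_vecMul {R : Type*} [CommSemiring R] [PartialOrder R]
    [IsOrderedRing R] {N : Matrix ι ι R} (hN : ∀ a b, 1 ≤ N a b) {v : ι → R} (hv : 0 ≤ v) :
    Fintype.card ι * ∑ a, v a ≤ ∑ b, (v ᵥ* N) b := by
  rw [← nsmul_eq_mul, ← Finset.card_univ, ← Finset.sum_const]
  refine Finset.sum_le_sum fun b _ => Finset.sum_le_sum fun a _ => ?_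
  simpa using mul_le_mul_of_nonneg_left (hN a b) (hv a)

theorem card_le_pow_of_vecMul_eq_smul {R : Type*} [CommRing R] [LinearOrder R]
    [IsStrictOrderedRing R] {N : Matrix ι ι R} {n : ℕ} (hN : ∀ a b, 1 ≤ (N ^ n) a b)
    {v : ι → R} (hv : 0 ≤ v) (hpos : 0 < ∑ a, v a) {μ : R} (h : v ᵥ* N = μ • v) :
    (Fintype.card ι : R) ≤ μ ^ n := by
  have := card_mul_sum_le_sum_vecMul hN hv
  simp only [vecMul_pow_eq_pow_smul h, Pi.smul_apply, smul_eq_mul, ← Finset.mul_sum] at this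
  exact le_of_mul_le_mul_right this hpos

theorem isIntegral_of_vecMul_eq_smul {N : Matrix ι ι ℤ} {v : ι → ℚ} {μ : ℚ} (hv : v ≠ 0)
    (h : v ᵥ* N.map (Int.castRingHom ℚ) = μ • v) : IsIntegral ℤ μ := by
  refine ⟨N.charpoly, N.charpoly_monic, ?_⟩
  rw [← Polynomial.eval_map, algebraMap_int_eq, ← charpoly_map, eval_charpoly,
    ← exists_vecMul_eq_zero_iff]
  refine ⟨v, hv, ?_⟩
  rw [vecMul_sub, h, scalar_apply, vecMul_diagonal_const, op_smul_eq_smul, sub_self]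

theorem abs_eq_one_of_vecMul_eq_smul {N : Matrix ι ι ℤ} (hN : IsUnit N.det)
    {v : ι → ℚ} {μ : ℚ} (hv : v ≠ 0) (h : v ᵥ* N.map (Int.castRingHom ℚ) = μ • v) :
    |μ| = 1 := by
  have hinv : v = μ • (v ᵥ* N⁻¹.map (Int.castRingHom ℚ)) := by
    rw [← smul_vecMul, ← h, vecMul_vecMul, ← Matrix.map_mul, mul_nonsing_inv N hN,
      Matrix.map_one _ (map_zero _) (map_one _), vecMul_one]
  have hμ : μ ≠ 0 := by
    rintro rfl
    exact hv (by rwa [zero_smul] at hinv)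
  have h' : v ᵥ* N⁻¹.map (Int.castRingHom ℚ) = μ⁻¹ • v := by
    rw [eq_inv_smul_iff₀ hμ, ← hinv]
  obtain ⟨z, rfl⟩ := IsIntegrallyClosed.isIntegral_iff.mp (isIntegral_of_vecMul_eq_smul hv h)
  obtain ⟨z', hz'⟩ := IsIntegrallyClosed.isIntegral_iff.mp (isIntegral_of_vecMul_eq_smul hv h')
  have : z * z' = 1 := by
    apply Int.cast_injective (α := ℚ)
    simp only [algebraMap_int_eq, eq_intCast] at hz' hμ
    rw [Int.cast_mul, hz', mul_inv_cancel₀ hμ, Int.cast_one]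
  rcases Int.eq_one_or_neg_one_of_mul_eq_one this with rfl | rfl <;> simp

end Matrix

namespace FreeMonoid

variable {A : Type*}

theorem mul_eq_mul_iff {s t u v : FreeMonoid A} :
    s * t = u * v ↔ (∃ z, s = u * z ∧ v = z * t) ∨ ∃ z, u = s * z ∧ t = z * v :=
  List.append_eq_append_iff.trans (or_comm.trans (by rfl))

theorem eq_one_of_mul_eq_one {s t : FreeMonoid A} (h : s * t = 1) : s = 1 :=
  (List.append_eq_nil_iff.mp h).1

variable [DecidableEq A]

def parikh (u : FreeMonoid A) (b : A) : ℤ := u.toList.count b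

@[simp] theorem parikh_one : parikh (1 : FreeMonoid A) = 0 := rfl

@[simp] theorem parikh_mul (u v : FreeMonoid A) : parikh (u * v) = parikh u + parikh v := by
  ext b
  simp [parikh, List.count_append]

@[simp] theorem parikh_of (a : A) : parikh (of a) = Pi.single a 1 := by
  ext b
  simp [parikh, Pi.single_apply, List.count_singleton, eq_comm (a := a)]

theorem parikh_nonneg (u : FreeMonoid A) (b : A) : 0 ≤ parikh u b := Int.natCast_nonneg _

theorem parikh_le_length (u : FreeMonoid A) (b : A) : parikh u b ≤ u.length :=
  Int.ofNat_le.mpr List.count_le_length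

theorem sum_parikh [Fintype A] (u : FreeMonoid A) : ∑ b, parikh u b = u.length := by
  induction u using FreeMonoid.recOn with
  | one => simp
  | of_mul a u ih => simp [Finset.sum_add_distrib, ih, length_mul, length_of, add_comm]

end FreeMonoid

open FreeMonoid Matrix

variable {A : Type*}

theorem abs_le_of_mul_eq_pow {f : FreeMonoid A → ℤ} (hf : ∀ s t, f (s * t) = f s + f t)
    {w : FreeMonoid A} (hw : f w = 0) {K : ℤ} (hK : ∀ s t, w = s * t → |f s| ≤ K) :
    ∀ {k : ℕ} {s t : FreeMonoid A}, s * t = w ^ k → |f s| ≤ K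
  | 0, s, t, h => by
    rw [eq_one_of_mul_eq_one h]
    exact hK 1 w (one_mul w).symm
  | k + 1, s, t, h => by
    rw [pow_succ', mul_eq_mul_iff] at h
    obtain ⟨z, rfl, hz⟩ | ⟨z, rfl, -⟩ := h
    · rw [hf, hw, zero_add]
      exact abs_le_of_mul_eq_pow hf hw hK hz.symm
    · exact hK s z rfl

theorem abs_le_of_isFactor_pow {f : FreeMonoid A → ℤ} (hf : ∀ s t, f (s * t) = f s + f t)
    {w : FreeMonoid A} (hw : f w = 0) {K : ℤ} (hK : ∀ s t, w = s * t → |f s| ≤ K)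
    {u : FreeMonoid A} {k : ℕ} (hu : IsFactor u (w ^ k)) : |f u| ≤ 2 * K := by
  obtain ⟨s, t, h⟩ := hu
  have hs : |f s| ≤ K := abs_le_of_mul_eq_pow hf hw hK (by rw [h, mul_assoc])
  have hsu : |f (s * u)| ≤ K := abs_le_of_mul_eq_pow hf hw hK h.symm
  rw [hf] at hsu
  calc |f u| = |(f s + f u) - f s| := by rw [add_sub_cancel_left]
    _ ≤ |f s + f u| + |f s| := abs_sub _ _
    _ ≤ 2 * K := by linarith

theorem abs_parikh_sub_le_of_isFactor_pow [DecidableEq A] {w u : FreeMonoid A} {k : ℕ}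
    (hu : IsFactor u (w ^ k)) (b : A) :
    |(w.length : ℤ) * parikh u b - u.length * parikh w b| ≤ 2 * w.length ^ 2 := by
  refine abs_le_of_isFactor_pow (f := fun u => (w.length : ℤ) * parikh u b - u.length * parikh w b)
    (fun s t => ?_) (by ring) (fun s t hst => ?_) hu
  · simp only [parikh_mul, Pi.add_apply, length_mul, Nat.cast_add]
    ring
  · have hs : (s.length : ℤ) ≤ w.length := by simp [hst, length_mul]
    have hw0 : (0 : ℤ) ≤ w.length := w.length.cast_nonneg
    rw [sq]
    exact abs_sub_le_of_nonneg_of_le (mul_nonneg hw0 (parikh_nonneg s b))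
      (mul_le_mul_of_nonneg_left ((parikh_le_length s b).trans hs) hw0)
      (mul_nonneg s.length.cast_nonneg (parikh_nonneg w b))
      (mul_le_mul hs (parikh_le_length w b) (parikh_nonneg w b) hw0)

theorem mul_eq_mul_of_abs_sub_le {x x' y y' D D' : ℤ} {L L' : ℕ → ℤ} (hL : ∀ N, ∃ m, N < L m)
    (hx : ∀ m, |L m * x' - L' m * x| ≤ D) (hy : ∀ m, |L m * y' - L' m * y| ≤ D') :
    y * x' = x * y' := by
  have hD : 0 ≤ D := (abs_nonneg _).trans (hx 0)
  have hD' : 0 ≤ D' := (abs_nonneg _).trans (hy 0)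
  obtain ⟨m, hm⟩ := hL (|y| * D + |x| * D')
  have hLm : 0 < L m := lt_of_le_of_lt (by positivity) hm
  by_contra hne
  have hlower : L m ≤ |L m * (y * x' - x * y')| := by
    rw [abs_mul, abs_of_pos hLm]
    exact le_mul_of_one_le_right hLm.le (Int.one_le_abs (sub_ne_zero.mpr hne))
  have hupper : |L m * (y * x' - x * y')| ≤ |y| * D + |x| * D' :=
    calc |L m * (y * x' - x * y')|
        = |y * (L m * x' - L' m * x) - x * (L m * y' - L' m * y)| := by ring_nf
      _ ≤ |y| * |L m * x' - L' m * x| + |x| * |L m * y' - L' m * y| := by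
          rw [← abs_mul, ← abs_mul]; exact abs_sub _ _
      _ ≤ |y| * D + |x| * D' := by gcongr <;> simp [hx, hy]
  linarith

theorem mul_vecMul_apply_eq_of_abs_sub_le [Fintype A] {M : Matrix A A ℤ} {p : ℕ → A → ℤ}
    (hp : ∀ m, p (m + 1) = p m ᵥ* M) {L : ℕ → ℤ} (hL : ∀ N, ∃ m, N < L m) {v : A → ℤ}
    {P C : ℤ} (hC : ∀ m b, |P * p m b - L m * v b| ≤ C) (b c : A) :
    v c * (v ᵥ* M) b = v b * (v ᵥ* M) c := by
  have key : ∀ m b, |L m * (v ᵥ* M) b - L (m + 1) * v b| ≤ C + ∑ a, C * |M a b| := by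
    intro m b
    have hsum : ∑ a, (P * p m a - L m * v a) * M a b = P * p (m + 1) b - L m * (v ᵥ* M) b := by
      simp only [hp, vecMul, dotProduct, Finset.mul_sum, ← Finset.sum_sub_distrib]
      exact Finset.sum_congr rfl fun a _ => by ring
    have hsum_le : |∑ a, (P * p m a - L m * v a) * M a b| ≤ ∑ a, C * |M a b| :=
      (Finset.abs_sum_le_sum_abs _ _).trans <| Finset.sum_le_sum fun a _ => by
        rw [abs_mul]; exact mul_le_mul_of_nonneg_right (hC m a) (abs_nonneg _)
    calc |L m * (v ᵥ* M) b - L (m + 1) * v b|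
        = |(P * p (m + 1) b - L (m + 1) * v b) - ∑ a, (P * p m a - L m * v a) * M a b| := by
          rw [hsum]; ring_nf
      _ ≤ |P * p (m + 1) b - L (m + 1) * v b| + |∑ a, (P * p m a - L m * v a) * M a b| :=
          abs_sub _ _
      _ ≤ C + ∑ a, C * |M a b| := add_le_add (hC _ _) hsum_le
  exact mul_eq_mul_of_abs_sub_le hL (key · b) (key · c)

theorem exists_vecMul_map_eq_smul [Fintype A] {M : Matrix A A ℤ} {v : A → ℤ} (hv : v ≠ 0)
    (h : ∀ b c, v c * (v ᵥ* M) b = v b * (v ᵥ* M) c) :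
    ∃ μ : ℚ,
      (Int.castRingHom ℚ ∘ v) ᵥ* M.map (Int.castRingHom ℚ) = μ • (Int.castRingHom ℚ ∘ v) := by
  obtain ⟨c, hc⟩ := Function.ne_iff.mp hv
  refine ⟨(v ᵥ* M) c / v c, funext fun b => ?_⟩
  rw [← RingHom.map_vecMul]
  simp only [Function.comp_apply, eq_intCast, Pi.smul_apply, smul_eq_mul]
  rw [div_mul_eq_mul_div, eq_div_iff (Int.cast_ne_zero.mpr hc)]
  exact_mod_cast (mul_comm _ _).trans ((h b c).trans (mul_comm _ _))

section Substitution

variable [Fintype A] [DecidableEq A]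

def incidenceMatrix (φ : Monoid.End (FreeMonoid A)) : Matrix A A ℤ :=
  Matrix.of fun a b => parikh (φ (of a)) b

theorem parikh_apply (φ : Monoid.End (FreeMonoid A)) (u : FreeMonoid A) :
    parikh (φ u) = parikh u ᵥ* incidenceMatrix φ := by
  induction u using FreeMonoid.recOn with
  | one => simp
  | of_mul a u ih => rw [map_mul, parikh_mul, parikh_mul, ih, add_vecMul, parikh_of,
      single_one_vecMul]; rfl

theorem parikh_pow_apply (φ : Monoid.End (FreeMonoid A)) (n : ℕ) (u : FreeMonoid A) :
    parikh ((φ ^ n) u) = parikh u ᵥ* incidenceMatrix φ ^ n := by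
  induction n with
  | zero => simp
  | succ n ih =>
    rw [pow_succ', Monoid.End.coe_mul, Function.comp_apply, parikh_apply, ih, vecMul_vecMul,
      ← pow_succ]

theorem one_le_incidenceMatrix_pow_apply {φ : Monoid.End (FreeMonoid A)} {n : ℕ} {a b : A}
    (h : IsFactor (of b) ((φ ^ n) (of a))) : 1 ≤ (incidenceMatrix φ ^ n) a b := by
  obtain ⟨s, t, hst⟩ := h
  have hrow : (incidenceMatrix φ ^ n) a b = parikh ((φ ^ n) (of a)) b := by
    rw [parikh_pow_apply, parikh_of, single_one_vecMul, row_apply]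
  rw [hrow, hst, parikh_mul, parikh_mul, parikh_of]
  simp only [Pi.add_apply, Pi.single_eq_same]
  linarith [parikh_nonneg s b, parikh_nonneg t b]

theorem card_mul_length_le_length_pow_apply {φ : Monoid.End (FreeMonoid A)} {n : ℕ}
    (hM : ∀ a b, 1 ≤ (incidenceMatrix φ ^ n) a b) (u : FreeMonoid A) :
    Fintype.card A * u.length ≤ ((φ ^ n) u).length := by
  have := card_mul_sum_le_sum_vecMul hM (parikh_nonneg u)
  rw [← parikh_pow_apply, sum_parikh, sum_parikh] at this
  exact_mod_cast this

theorem exists_lt_length_pow_apply_of (hA : 2 ≤ Fintype.card A) {φ : Monoid.End (FreeMonoid A)}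
    {n : ℕ} (hM : ∀ a b, 1 ≤ (incidenceMatrix φ ^ n) a b) (a : A) (N : ℤ) :
    ∃ m, N < ((φ ^ m) (of a)).length := by
  have hgrow : ∀ j : ℕ, j < ((φ ^ (j * n)) (of a)).length := by
    intro j
    induction j with
    | zero => simp [length_of]
    | succ j ih =>
      have := card_mul_length_le_length_pow_apply hM ((φ ^ (j * n)) (of a))
      have hpow : (φ ^ n) ((φ ^ (j * n)) (of a)) = (φ ^ ((j + 1) * n)) (of a) := by
        rw [Nat.succ_mul, add_comm, pow_add]; rfl
      rw [hpow] at this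
      nlinarith
  refine ⟨N.toNat * n, ?_⟩
  have := hgrow N.toNat
  have := N.self_le_toNat
  omega

end Substitution

/-- A primitive substitution on an alphabet with at least two letters that is unimodular
(the determinant of its incidence matrix is `±1`) is aperiodic: no nonempty word `w` is
such that every word of the language of the substitution is a factor of a power of `w`. -/
theorem aperiodic_of_primitive_unimodular {A : Type} [Fintype A] [DecidableEq A]
    (hA : 2 ≤ Fintype.card A) (φ : Monoid.End (FreeMonoid A))
    (hprim : ∃ n : ℕ, 1 ≤ n ∧ ∀ a b : A, IsFactor (FreeMonoid.of b) ((φ ^ n) (FreeMonoid.of a)))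
    (hunimod :
      (Matrix.det (fun a b : A =>
          ((FreeMonoid.toList (φ (FreeMonoid.of a))).count b : ℤ)) = 1 ∨
        Matrix.det (fun a b : A =>
          ((FreeMonoid.toList (φ (FreeMonoid.of a))).count b : ℤ)) = -1)) :
    ¬ ∃ w : FreeMonoid A, w ≠ 1 ∧
        ∀ u : FreeMonoid A,
          (∃ (n : ℕ) (a : A), IsFactor u ((φ ^ n) (FreeMonoid.of a))) →
            ∃ k : ℕ, IsFactor u (w ^ k) := by
  rintro ⟨w, hw, hper⟩
  obtain ⟨n, -, hprim⟩ := hprim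
  obtain ⟨a⟩ : Nonempty A := Fintype.card_pos_iff.mp (by omega)
  have hM : ∀ a b, 1 ≤ (incidenceMatrix φ ^ n) a b :=
    fun a b => one_le_incidenceMatrix_pow_apply (hprim a b)
  have hcross := mul_vecMul_apply_eq_of_abs_sub_le (p := fun m => parikh ((φ ^ m) (of a)))
    (fun m => by rw [pow_succ', ← parikh_apply]; rfl)
    (exists_lt_length_pow_apply_of hA hM a) fun m b =>
      (hper _ ⟨m, a, 1, 1, by simp⟩).elim fun _ hk => abs_parikh_sub_le_of_isFactor_pow hk b
  have hlen : (0 : ℤ) < ∑ b, parikh w b := by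
    rw [sum_parikh]; exact_mod_cast Nat.pos_of_ne_zero (mt length_eq_zero.mp hw)
  obtain ⟨μ, heig⟩ := exists_vecMul_map_eq_smul (fun h => by simp [h] at hlen) hcross
  set v := Int.castRingHom ℚ ∘ parikh w
  have hv : 0 ≤ v := fun b => by simpa [v] using parikh_nonneg w b
  have hvpos : 0 < ∑ b, v b := by
    simp only [v, Function.comp_apply, eq_intCast, ← Int.cast_sum]
    exact_mod_cast hlen
  have hMq : ∀ a b, 1 ≤ ((incidenceMatrix φ).map (Int.castRingHom ℚ) ^ n) a b := fun a b => by
    rw [← Matrix.map_pow, map_apply, eq_intCast]; exact_mod_cast hM a b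
  have hcard := card_le_pow_of_vecMul_eq_smul hMq hv hvpos heig
  have hμ1 := abs_eq_one_of_vecMul_eq_smul (Int.isUnit_iff.mpr hunimod)
    (fun h => by simp [h] at hvpos) heig
  have : (Fintype.card A : ℚ) ≤ 1 :=
    hcard.trans ((le_abs_self _).trans (by rw [abs_pow, hμ1, one_pow]))
  have : (2 : ℚ) ≤ Fintype.card A := by exact_mod_cast hA
  linarith
end

section
/- Let ξ be the endomorphism of the free group F(x₀, x₁, x₂, x₃) on four generators defined by ξ(x₀) = x₀x₀x₁, ξ(x₁) = x₀x₂, ξ(x₂) = x₃x₀x₁, ξ(x₃) = x₃x₂x₀. Then ξ is an automorphism of F(x₀, x₁, x₂, x₃), i.e., it is bijective. -/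
/-- The endomorphism of the free group on four generators given by
`x₀ ↦ x₀x₀x₁, x₁ ↦ x₀x₂, x₂ ↦ x₃x₀x₁, x₃ ↦ x₃x₂x₀` is an automorphism. -/
theorem xi_free_group_automorphism (ξ : FreeGroup (Fin 4) →* FreeGroup (Fin 4))
    (h0 : ξ (FreeGroup.of 0) = FreeGroup.of 0 * FreeGroup.of 0 * FreeGroup.of 1)
    (h1 : ξ (FreeGroup.of 1) = FreeGroup.of 0 * FreeGroup.of 2)
    (h2 : ξ (FreeGroup.of 2) = FreeGroup.of 3 * FreeGroup.of 0 * FreeGroup.of 1)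
    (h3 : ξ (FreeGroup.of 3) = FreeGroup.of 3 * FreeGroup.of 2 * FreeGroup.of 0) :
    Function.Bijective ξ := by
  set a := FreeGroup.of (0 : Fin 4)
  set b := FreeGroup.of (1 : Fin 4)
  set c := FreeGroup.of (2 : Fin 4)
  set d := FreeGroup.of (3 : Fin 4)
  set η : FreeGroup (Fin 4) →* FreeGroup (Fin 4) :=
    FreeGroup.lift (fun i : Fin 4 =>
      match i with
      | 0 => b⁻¹ * a * c⁻¹ * d
      | 1 => (d⁻¹ * c * a⁻¹ * b) * (d⁻¹ * c * a⁻¹ * b) * a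
      | 2 => d⁻¹ * c * a⁻¹ * b * b
      | 3 => c * a⁻¹ * b⁻¹ * a * c⁻¹ * d) with hη
  have e0 : η a = b⁻¹ * a * c⁻¹ * d := FreeGroup.lift_apply_of
  have e1 : η b = (d⁻¹ * c * a⁻¹ * b) * (d⁻¹ * c * a⁻¹ * b) * a := FreeGroup.lift_apply_of
  have e2 : η c = d⁻¹ * c * a⁻¹ * b * b := FreeGroup.lift_apply_of
  have e3 : η d = c * a⁻¹ * b⁻¹ * a * c⁻¹ * d := FreeGroup.lift_apply_of
  have k0 : η (ξ a) = a := by rw [h0, map_mul, map_mul, e0, e1]; group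
  have k1 : η (ξ b) = b := by rw [h1, map_mul, e0, e2]; group
  have k2 : η (ξ c) = c := by rw [h2, map_mul, map_mul, e3, e0, e1]; group
  have k3 : η (ξ d) = d := by rw [h3, map_mul, map_mul, e3, e2, e0]; group
  have m0 : ξ (η a) = a := by
    rw [e0, map_mul, map_mul, map_mul, map_inv, map_inv, h0, h1, h2, h3]; group
  have m1 : ξ (η b) = b := by
    rw [e1]; simp only [map_mul, map_inv, h0, h1, h2, h3]; group
  have m2 : ξ (η c) = c := by
    rw [e2]; simp only [map_mul, map_inv, h0, h1, h2, h3]; group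
  have m3 : ξ (η d) = d := by
    rw [e3]; simp only [map_mul, map_inv, h0, h1, h2, h3]; group
  have hl : η.comp ξ = MonoidHom.id _ := by
    apply FreeGroup.ext_hom
    intro i
    fin_cases i
    · exact k0
    · exact k1
    · exact k2
    · exact k3
  have hr : ξ.comp η = MonoidHom.id _ := by
    apply FreeGroup.ext_hom
    intro i
    fin_cases i
    · exact m0
    · exact m1
    · exact m2
    · exact m3
  refine Function.bijective_iff_has_inverse.mpr ⟨η, ?_, ?_⟩
  · intro x; exact congrArg (fun f : FreeGroup (Fin 4) →* _ => f x) hl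
  · intro x; exact congrArg (fun f : FreeGroup (Fin 4) →* _ => f x) hr
end

section
/- Let σ be the endomorphism of the free group F(x₀, x₁, x₂, x₃) on four generators defined by σ(x₀) = x₀x₁x₂x₃, σ(x₁) = x₀x₁x₃, σ(x₂) = x₀x₂x₁x₂x₃, σ(x₃) = x₀x₂x₁x₃. Then the element w = x₀x₂⁻¹x₀x₂⁻¹x₃x₁⁻¹x₂x₀⁻¹ is a nontrivial element of the kernel of σ; in particular, σ is not injective. -/
/-- Abbreviation for the generators of the free group on four letters. -/
def x (i : Fin 4) : FreeGroup (Fin 4) := FreeGroup.of i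

/-- The return substitution `τ_{0,1}` of the Thue–Morse substitution, viewed as an
endomorphism of the free group on four generators, kills the nontrivial element
`x₀x₂⁻¹x₀x₂⁻¹x₃x₁⁻¹x₂x₀⁻¹`; in particular it is not injective. -/
theorem thue_morse_return_not_injective (σ : FreeGroup (Fin 4) →* FreeGroup (Fin 4))
    (h0 : σ (x 0) = x 0 * x 1 * x 2 * x 3)
    (h1 : σ (x 1) = x 0 * x 1 * x 3)
    (h2 : σ (x 2) = x 0 * x 2 * x 1 * x 2 * x 3)
    (h3 : σ (x 3) = x 0 * x 2 * x 1 * x 3) :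
    x 0 * (x 2)⁻¹ * x 0 * (x 2)⁻¹ * x 3 * (x 1)⁻¹ * x 2 * (x 0)⁻¹ ≠ 1 ∧
      σ (x 0 * (x 2)⁻¹ * x 0 * (x 2)⁻¹ * x 3 * (x 1)⁻¹ * x 2 * (x 0)⁻¹) = 1 ∧
      ¬ Function.Injective σ := by
  have hne : x 0 * (x 2)⁻¹ * x 0 * (x 2)⁻¹ * x 3 * (x 1)⁻¹ * x 2 * (x 0)⁻¹ ≠ 1 := by
    simp only [x]
    decide
  have hker : σ (x 0 * (x 2)⁻¹ * x 0 * (x 2)⁻¹ * x 3 * (x 1)⁻¹ * x 2 * (x 0)⁻¹) = 1 := by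
    simp only [map_mul, map_inv, h0, h1, h2, h3]
    group
  exact ⟨hne, hker, fun hinj => hne (hinj (hker.trans (map_one σ).symm))⟩
end
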